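/- arXiv:2401.16567 — 2 statements merged into one kernel-verified Lean document; each statement's English description precedes it below -/
import Mathlib

section
/- Let d ≥ 1, σ > 0, let ρ : ℝ^d → (0,∞) be a strictly positive measurable function, let L ∈ ℝ^{d×d} be invertible and Σ := L L^T. Let N_d(m, C) denote the Gaussian measure on ℝ^d with mean m and covariance C. Define the random walk Metropolis kernel M_{ρ,Σ}(x, A) := ∫_A min{1, ρ(x̃)/ρ(x)} N_d(x, σ²Σ)(dx̃) + 1_A(x)(1 − ∫_{ℝ^d} min{1, ρ(x̃)/ρ(x)} N_d(x, σ²Σ)(dx̃)), and define M_{ρ∘α, I_d} by the same formula with ρ replaced by ρ∘α, where α(y) := L y, and with proposal N_d(·, σ² I_d). Then for all x ∈ ℝ^d and all Borel sets A ⊆ ℝ^d, M_{ρ,Σ}(x, A) = M_{ρ∘α, I_d}(L^{-1} x, L^{-1}(A)), where L^{-1}(A) = {y : L y ∈ A}. -/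
/-!
The substitution `z = L y` carries `N_d(L⁻¹x, σ²I)` to `N_d(x, σ²LLᵀ)`: the quadratic form in the
exponent is invariant under the conjugation `C ↦ L C Lᵀ`, and the factor `|det L|⁻¹` it puts on
the normalising constant is exactly the Jacobian of `y ↦ L y`. Both kernels are therefore the same
acceptance probability integrated against corresponding measures, and the rejection terms agree
because `x ∈ A ↔ L⁻¹x ∈ L⁻¹(A)`.
-/

open MeasureTheory Matrix

/-- The multivariate Gaussian density `N_d(x; m, C)` on `ℝ^d` with mean `m` and
(positive definite) covariance `C`. -/
noncomputable def gaussDensity (d : ℕ) (m : Fin d → ℝ)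
    (C : Matrix (Fin d) (Fin d) ℝ) (x : Fin d → ℝ) : ℝ :=
  (2 * Real.pi) ^ (-(d : ℝ) / 2) * C.det ^ (-(1 : ℝ) / 2) *
    Real.exp (-((x - m) ⬝ᵥ C⁻¹.mulVec (x - m)) / 2)

/-- The multivariate Gaussian measure `N_d(m, C)` on `ℝ^d`. -/
noncomputable def gaussMeasure (d : ℕ) (m : Fin d → ℝ)
    (C : Matrix (Fin d) (Fin d) ℝ) : Measure (Fin d → ℝ) :=
  volume.withDensity fun x => ENNReal.ofReal (gaussDensity d m C x)

/-- The value `M_{ρ,Σ}(x, A)` of the random walk Metropolis kernel with target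
density `ρ`, proposal covariance `σ²C` and current state `x` on the set `A`. -/
noncomputable def rwmKernelVal (d : ℕ) (σ : ℝ) (ρ : (Fin d → ℝ) → ℝ)
    (C : Matrix (Fin d) (Fin d) ℝ) (x : Fin d → ℝ) (A : Set (Fin d → ℝ)) : ℝ :=
  (∫ z in A, min 1 (ρ z / ρ x) ∂(gaussMeasure d x (σ ^ 2 • C))) +
    Set.indicator A (fun _ => (1 : ℝ)) x *
      (1 - ∫ z, min 1 (ρ z / ρ x) ∂(gaussMeasure d x (σ ^ 2 • C)))

section

variable {n : Type*} [Fintype n] [DecidableEq n] {L : Matrix n n ℝ}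

lemma Matrix.mulVec_mulVec_nonsing_inv (hL : IsUnit L.det) (v : n → ℝ) : L *ᵥ (L⁻¹ *ᵥ v) = v := by
  rw [mulVec_mulVec, mul_nonsing_inv L hL, one_mulVec]

lemma Matrix.nonsing_inv_mulVec_mulVec (hL : IsUnit L.det) (v : n → ℝ) : L⁻¹ *ᵥ (L *ᵥ v) = v := by
  rw [mulVec_mulVec, nonsing_inv_mul L hL, one_mulVec]

lemma Matrix.measurableEmbedding_mulVec (hL : IsUnit L.det) :
    MeasurableEmbedding (L *ᵥ · : (n → ℝ) → n → ℝ) := by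
  have hmeas : ∀ M : Matrix n n ℝ, Measurable (M *ᵥ · : (n → ℝ) → n → ℝ) := fun M =>
    (continuous_const.matrix_mulVec continuous_id).measurable
  refine .of_measurable_inverse (hmeas L) ?_ (hmeas L⁻¹) (nonsing_inv_mulVec_mulVec hL)
  rw [(Function.RightInverse.surjective (mulVec_mulVec_nonsing_inv hL)).range_eq]
  exact .univ

lemma Matrix.dotProduct_inv_mulVec_conj (hL : IsUnit L.det) (C : Matrix n n ℝ) (v : n → ℝ) :
    (L *ᵥ v) ⬝ᵥ (L * C * Lᵀ)⁻¹ *ᵥ (L *ᵥ v) = v ⬝ᵥ C⁻¹ *ᵥ v := by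
  rw [Matrix.mul_inv_rev, Matrix.mul_inv_rev, ← transpose_nonsing_inv, ← mulVec_mulVec,
    ← mulVec_mulVec, nonsing_inv_mulVec_mulVec hL, dotProduct_transpose_mulVec,
    nonsing_inv_mulVec_mulVec hL, dotProduct_comm]

end

lemma Real.sq_rpow_neg_half (a : ℝ) : (a ^ 2) ^ (-(1 : ℝ) / 2) = |a|⁻¹ := by
  rw [← sq_abs, ← Real.rpow_natCast, ← Real.rpow_mul (abs_nonneg a)]
  norm_num [Real.rpow_neg_one]

section

variable {d : ℕ} {L C : Matrix (Fin d) (Fin d) ℝ}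

lemma gaussDensity_mulVec (hL : IsUnit L.det) (hC : 0 ≤ C.det) (m z : Fin d → ℝ) :
    gaussDensity d m C z = |L.det| * gaussDensity d (L *ᵥ m) (L * C * Lᵀ) (L *ᵥ z) := by
  have hdet : (L * C * Lᵀ).det = L.det ^ 2 * C.det := by
    rw [det_mul, det_mul, det_transpose]; ring
  have habs : |L.det| ≠ 0 := abs_ne_zero.2 hL.ne_zero
  unfold gaussDensity
  rw [← mulVec_sub, dotProduct_inv_mulVec_conj hL, hdet,
    Real.mul_rpow (sq_nonneg _) hC, Real.sq_rpow_neg_half]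
  field_simp

lemma map_mulVec_gaussMeasure (hL : IsUnit L.det) (hC : 0 ≤ C.det) (m : Fin d → ℝ) :
    (gaussMeasure d m C).map (L *ᵥ ·) = gaussMeasure d (L *ᵥ m) (L * C * Lᵀ) := by
  have hT := measurableEmbedding_mulVec hL
  have hvol : volume.map (L *ᵥ ·) = ENNReal.ofReal |L.det|⁻¹ • volume := by
    have h := Real.map_matrix_volume_pi_eq_smul_volume_pi hL.ne_zero
    rwa [toLin'_apply', coe_mulVecLin, abs_inv] at h
  have habs : |L.det| ≠ 0 := abs_ne_zero.2 hL.ne_zero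
  ext s -
  rw [hT.map_apply, gaussMeasure, gaussMeasure, withDensity_apply', withDensity_apply']
  calc ∫⁻ z in (L *ᵥ ·) ⁻¹' s, ENNReal.ofReal (gaussDensity d m C z)
      = ∫⁻ z in (L *ᵥ ·) ⁻¹' s, ENNReal.ofReal |L.det| *
          ENNReal.ofReal (gaussDensity d (L *ᵥ m) (L * C * Lᵀ) (L *ᵥ z)) := by
        simp_rw [gaussDensity_mulVec hL hC m, ENNReal.ofReal_mul (abs_nonneg _)]
    _ = ENNReal.ofReal |L.det| * ∫⁻ y in s,
          ENNReal.ofReal (gaussDensity d (L *ᵥ m) (L * C * Lᵀ) y) ∂volume.map (L *ᵥ ·) := by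
        rw [lintegral_const_mul' _ _ ENNReal.ofReal_ne_top, hT.restrict_map, hT.lintegral_map]
    _ = ∫⁻ y in s, ENNReal.ofReal (gaussDensity d (L *ᵥ m) (L * C * Lᵀ) y) := by
        rw [hvol, Measure.restrict_smul, lintegral_smul_measure, smul_eq_mul, ← mul_assoc,
          ← ENNReal.ofReal_mul (abs_nonneg _), mul_inv_cancel₀ habs, ENNReal.ofReal_one, one_mul]

lemma rwmKernelVal_mulVec (σ : ℝ) (ρ : (Fin d → ℝ) → ℝ) (hL : IsUnit L.det) (hC : 0 ≤ C.det)
    (y : Fin d → ℝ) (A : Set (Fin d → ℝ)) :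
    rwmKernelVal d σ ρ (L * C * Lᵀ) (L *ᵥ y) A =
      rwmKernelVal d σ (fun z => ρ (L *ᵥ z)) C y ((L *ᵥ ·) ⁻¹' A) := by
  have hT := measurableEmbedding_mulVec hL
  have hproposal : gaussMeasure d (L *ᵥ y) (σ ^ 2 • (L * C * Lᵀ)) =
      (gaussMeasure d y (σ ^ 2 • C)).map (L *ᵥ ·) := by
    rw [map_mulVec_gaussMeasure hL (by rw [det_smul]; positivity), Matrix.mul_smul,
      Matrix.smul_mul]
  rw [rwmKernelVal, rwmKernelVal, hproposal, hT.setIntegral_map, hT.integral_map]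
  -- the indicator terms `A.indicator 1 (L *ᵥ y)` and `(L⁻¹(A)).indicator 1 y` agree definitionally
  rfl

end

theorem rwm_att_friendly_general
    (d : ℕ) (σ : ℝ)
    (ρ : (Fin d → ℝ) → ℝ)
    (L : Matrix (Fin d) (Fin d) ℝ) (hL : IsUnit L.det)
    (S : Matrix (Fin d) (Fin d) ℝ) (hS : S = L * Lᵀ)
    (x : Fin d → ℝ) (A : Set (Fin d → ℝ)) :
    rwmKernelVal d σ ρ S x A =
      rwmKernelVal d σ (fun y => ρ (L.mulVec y)) 1 (L⁻¹.mulVec x)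
        ((fun y => L.mulVec y) ⁻¹' A) := by
  have h := rwmKernelVal_mulVec σ ρ hL (C := 1) (by simp) (L⁻¹ *ᵥ x) A
  rwa [mul_one, mulVec_mulVec_nonsing_inv hL, ← hS] at h

/-- ATT-friendliness of random walk Metropolis: with `Σ = L Lᵀ` and
`α(y) = L y`, `M_{ρ,Σ}(x, A) = M_{ρ∘α, I}(L⁻¹ x, L⁻¹(A))`. -/
theorem rwm_att_friendly
    (d : ℕ) (hd : 1 ≤ d) (σ : ℝ) (hσ : 0 < σ)
    (ρ : (Fin d → ℝ) → ℝ) (hρ_meas : Measurable ρ) (hρ_pos : ∀ x, 0 < ρ x)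
    (L : Matrix (Fin d) (Fin d) ℝ) (hL : IsUnit L.det)
    (S : Matrix (Fin d) (Fin d) ℝ) (hS : S = L * Lᵀ)
    (x : Fin d → ℝ) (A : Set (Fin d → ℝ)) (hA : MeasurableSet A) :
    rwmKernelVal d σ ρ S x A =
      rwmKernelVal d σ (fun y => ρ (L.mulVec y)) 1 (L⁻¹.mulVec x)
        ((fun y => L.mulVec y) ⁻¹' A) :=
  rwm_att_friendly_general d σ ρ L hL S hS x A
end

section
/- Let d ≥ 1, σ > 0, let ρ : ℝ^d → (0,∞) be a strictly positive measurable function, let L ∈ ℝ^{d×d} be invertible, c ∈ ℝ^d, Σ := L L^T, and α(y) := L y + c. Let N_d(x; m, C) denote the Gaussian probability density at x with mean m and covariance C. Define the independent Metropolis–Hastings kernel M_{ρ,c,Σ}(x, A) := ∫_A β(x, x̃) N_d(c, σ²Σ)(dx̃) + 1_A(x)(1 − ∫_{ℝ^d} β(x, x̃) N_d(c, σ²Σ)(dx̃)) with acceptance probability β(x, x̃) := min{1, (ρ(x̃) N_d(x; c, σ²Σ)) / (ρ(x) N_d(x̃; c, σ²Σ))}, and define M_{ρ∘α, 0, I_d}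 by the same formulas with ρ replaced by ρ∘α, mean 0 and covariance σ² I_d. Then for all x ∈ ℝ^d and Borel A ⊆ ℝ^d, M_{ρ,c,Σ}(x, A) = M_{ρ∘α, 0, I_d}(α^{-1}(x), α^{-1}(A)). -/
/-!
The affine map `α y = L y + c` pushes `N_d(m, C)` forward to `N_d(L m + c, L C Lᵀ)`, and since `α`
has constant Jacobian the density transforms as `N_d(α y; L m + c, L C Lᵀ) = |det L|⁻¹ N_d(y; m, C)`.
The factor `|det L|⁻¹` cancels in the Metropolis–Hastings ratio, so the acceptance probability is
invariant under `α`; changing variables by `α` in both integrals of the kernel gives the identity.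
-/

open MeasureTheory Matrix

/-- The Metropolis–Hastings acceptance probability
`β_{ρ,c,Σ}(x, x̃) = min{1, ρ(x̃) N_d(x; c, σ²Σ) / (ρ(x) N_d(x̃; c, σ²Σ))}` of
independent Metropolis–Hastings with Gaussian proposal. -/
noncomputable def imhAccept (d : ℕ) (σ : ℝ) (ρ : (Fin d → ℝ) → ℝ)
    (c : Fin d → ℝ) (C : Matrix (Fin d) (Fin d) ℝ) (x z : Fin d → ℝ) : ℝ :=
  min 1 ((ρ z * gaussDensity d c (σ ^ 2 • C) x) /
    (ρ x * gaussDensity d c (σ ^ 2 • C) z))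

/-- The value `M_{ρ,c,Σ}(x, A)` of the independent Metropolis–Hastings kernel with
target density `ρ` and Gaussian proposal `N_d(c, σ²C)`. -/
noncomputable def imhKernelVal (d : ℕ) (σ : ℝ) (ρ : (Fin d → ℝ) → ℝ)
    (c : Fin d → ℝ) (C : Matrix (Fin d) (Fin d) ℝ)
    (x : Fin d → ℝ) (A : Set (Fin d → ℝ)) : ℝ :=
  (∫ z in A, imhAccept d σ ρ c C x z ∂(gaussMeasure d c (σ ^ 2 • C))) +
    Set.indicator A (fun _ => (1 : ℝ)) x *
      (1 - ∫ z, imhAccept d σ ρ c C x z ∂(gaussMeasure d c (σ ^ 2 • C)))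

namespace Matrix

variable {n : Type*} [Fintype n] [DecidableEq n]

noncomputable def affineMeasurableEquiv (L : Matrix n n ℝ) (hL : IsUnit L.det) (c : n → ℝ) :
    (n → ℝ) ≃ᵐ (n → ℝ) where
  toFun y := L *ᵥ y + c
  invFun z := L⁻¹ *ᵥ (z - c)
  left_inv y := by simp [mulVec_mulVec, nonsing_inv_mul _ hL]
  right_inv z := by simp [mulVec_mulVec, mul_nonsing_inv _ hL]
  measurable_toFun := by
    change Measurable fun y => L *ᵥ y + c
    fun_prop
  measurable_invFun := by
    change Measurable fun z => L⁻¹ *ᵥ (z - c)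
    fun_prop

@[simp]
lemma affineMeasurableEquiv_apply (L : Matrix n n ℝ) (hL : IsUnit L.det) (c y : n → ℝ) :
    affineMeasurableEquiv L hL c y = L *ᵥ y + c :=
  rfl

lemma map_affineMeasurableEquiv_volume (L : Matrix n n ℝ) (hL : IsUnit L.det) (c : n → ℝ) :
    (volume : Measure (n → ℝ)).map (affineMeasurableEquiv L hL c) =
      ENNReal.ofReal |L.det|⁻¹ • volume := by
  have hcomp : ⇑(affineMeasurableEquiv L hL c) = (· + c) ∘ toLin' L := by
    ext y; simp
  rw [hcomp, ← Measure.map_map (measurable_add_const c)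
      (toLin' L).continuous_of_finiteDimensional.measurable,
    Real.map_matrix_volume_pi_eq_smul_volume_pi hL.ne_zero, Measure.map_smul,
    map_add_right_eq_self, abs_inv]

lemma dotProduct_conj_inv_mulVec {R : Type*} [Field R] (L C : Matrix n n R) (hL : IsUnit L.det)
    (v : n → R) : L *ᵥ v ⬝ᵥ (L * C * Lᵀ)⁻¹ *ᵥ (L *ᵥ v) = v ⬝ᵥ C⁻¹ *ᵥ v := by
  have hcancel (w : n → R) : L⁻¹ *ᵥ (L *ᵥ w) = w := by
    rw [mulVec_mulVec, nonsing_inv_mul _ hL, one_mulVec]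
  rw [mul_inv_rev, mul_inv_rev, ← mulVec_mulVec, ← mulVec_mulVec, hcancel, dotProduct_mulVec,
    ← transpose_nonsing_inv, vecMul_transpose, hcancel]

end Matrix

lemma MeasurableEquiv.map_withDensity_comp {X Y : Type*} [MeasurableSpace X] [MeasurableSpace Y]
    (e : X ≃ᵐ Y) (μ : Measure X) (g : Y → ENNReal) :
    (μ.withDensity (g ∘ e)).map e = (μ.map e).withDensity g := by
  ext s hs
  rw [e.map_apply, withDensity_apply _ hs, withDensity_apply _ (e.measurable hs),
    e.restrict_map, lintegral_map_equiv]
  rfl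

section AffineChange

variable {d : ℕ} (L : Matrix (Fin d) (Fin d) ℝ) (c m : Fin d → ℝ) (C : Matrix (Fin d) (Fin d) ℝ)

lemma gaussDensity_affine (hL : IsUnit L.det) (hC : 0 ≤ C.det) (y : Fin d → ℝ) :
    gaussDensity d (L *ᵥ m + c) (L * C * Lᵀ) (L *ᵥ y + c) =
      |L.det|⁻¹ * gaussDensity d m C y := by
  have hdet : (L * C * Lᵀ).det ^ (-(1 : ℝ) / 2) = |L.det|⁻¹ * C.det ^ (-(1 : ℝ) / 2) := by
    rw [det_mul, det_mul, det_transpose, mul_comm, ← mul_assoc, ← sq, ← sq_abs,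
      Real.mul_rpow (by positivity) hC, ← Real.rpow_natCast, ← Real.rpow_mul (abs_nonneg _)]
    norm_num [Real.rpow_neg_one]
  have hdiff : L *ᵥ y + c - (L *ᵥ m + c) = L *ᵥ (y - m) := by
    rw [mulVec_sub]; abel
  rw [gaussDensity, gaussDensity, hdet, hdiff, dotProduct_conj_inv_mulVec L C hL]
  ring

lemma gaussMeasure_affine (hL : IsUnit L.det) (hC : 0 ≤ C.det) :
    gaussMeasure d (L *ᵥ m + c) (L * C * Lᵀ) =
      (gaussMeasure d m C).map (affineMeasurableEquiv L hL c) := by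
  have habs : 0 < |L.det| := abs_pos.2 hL.ne_zero
  have hdensity : (fun y => ENNReal.ofReal (gaussDensity d m C y)) =
      (ENNReal.ofReal |L.det| •
        fun z => ENNReal.ofReal (gaussDensity d (L *ᵥ m + c) (L * C * Lᵀ) z)) ∘
        affineMeasurableEquiv L hL c := by
    ext y
    simp only [Function.comp, Pi.smul_apply, smul_eq_mul, affineMeasurableEquiv_apply,
      gaussDensity_affine L c m _ hL hC, ← ENNReal.ofReal_mul habs.le,
      mul_inv_cancel_left₀ habs.ne']
  rw [gaussMeasure, gaussMeasure, hdensity, MeasurableEquiv.map_withDensity_comp,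
    map_affineMeasurableEquiv_volume, withDensity_smul_measure,
    withDensity_smul' _ _ ENNReal.ofReal_ne_top, smul_smul, ← ENNReal.ofReal_mul (by positivity),
    inv_mul_cancel₀ habs.ne', ENNReal.ofReal_one, one_smul]

lemma imhAccept_affine (σ : ℝ) (ρ : (Fin d → ℝ) → ℝ) (hL : IsUnit L.det) (hC : 0 ≤ C.det)
    (x y : Fin d → ℝ) :
    imhAccept d σ ρ (L *ᵥ m + c) (L * C * Lᵀ) (L *ᵥ x + c) (L *ᵥ y + c) =
      imhAccept d σ (fun y => ρ (L *ᵥ y + c)) m C x y := by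
  have hcov : σ ^ 2 • (L * C * Lᵀ) = L * (σ ^ 2 • C) * Lᵀ := by
    rw [mul_smul_comm, smul_mul_assoc]
  have hC' : 0 ≤ (σ ^ 2 • C).det := by
    rw [det_smul]; positivity
  have hdetL : |L.det|⁻¹ ≠ 0 := by simpa using hL.ne_zero
  rw [imhAccept, imhAccept, hcov, gaussDensity_affine L c m _ hL hC',
    gaussDensity_affine L c m _ hL hC', mul_left_comm, mul_left_comm (ρ _),
    mul_div_mul_left _ _ hdetL]

lemma imhKernelVal_affine (σ : ℝ) (ρ : (Fin d → ℝ) → ℝ) (hL : IsUnit L.det) (hC : 0 ≤ C.det)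
    (x : Fin d → ℝ) (A : Set (Fin d → ℝ)) :
    imhKernelVal d σ ρ (L *ᵥ m + c) (L * C * Lᵀ) (L *ᵥ x + c) A =
      imhKernelVal d σ (fun y => ρ (L *ᵥ y + c)) m C x ((fun y => L *ᵥ y + c) ⁻¹' A) := by
  have hproposal : gaussMeasure d (L *ᵥ m + c) (σ ^ 2 • (L * C * Lᵀ)) =
      (gaussMeasure d m (σ ^ 2 • C)).map (affineMeasurableEquiv L hL c) := by
    rw [← gaussMeasure_affine L c m _ hL (by rw [det_smul]; positivity), mul_smul_comm,
      smul_mul_assoc]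
  have hindicator : A.indicator (fun _ => (1 : ℝ)) (L *ᵥ x + c) =
      ((fun y => L *ᵥ y + c) ⁻¹' A).indicator (fun _ => 1) x :=
    (Set.indicator_comp_right _).symm
  rw [imhKernelVal, imhKernelVal, hproposal, setIntegral_map_equiv, integral_map_equiv,
    hindicator]
  simp only [affineMeasurableEquiv_apply, imhAccept_affine L c m C σ ρ hL hC]
  rfl

end AffineChange

theorem imh_att_friendly_general
    (d : ℕ) (σ : ℝ)
    (ρ : (Fin d → ℝ) → ℝ)
    (L : Matrix (Fin d) (Fin d) ℝ) (hL : IsUnit L.det) (c : Fin d → ℝ)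
    (S : Matrix (Fin d) (Fin d) ℝ) (hS : S = L * Lᵀ)
    (x : Fin d → ℝ) (A : Set (Fin d → ℝ)) :
    imhKernelVal d σ ρ c S x A =
      imhKernelVal d σ (fun y => ρ (L.mulVec y + c)) 0 1
        (L⁻¹.mulVec (x - c)) ((fun y => L.mulVec y + c) ⁻¹' A) := by
  have hx : L *ᵥ (L⁻¹ *ᵥ (x - c)) + c = x := by
    rw [mulVec_mulVec, mul_nonsing_inv _ hL, one_mulVec, sub_add_cancel]
  have key := imhKernelVal_affine L c 0 1 σ ρ hL (by simp) (L⁻¹ *ᵥ (x - c)) A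
  rwa [mulVec_zero, zero_add, Matrix.mul_one, hx, ← hS] at key

/-- ATT-friendliness of independent Metropolis–Hastings with Gaussian
proposal: with `Σ = L Lᵀ` and `α(y) = L y + c`,
`M_{ρ,c,Σ}(x, A) = M_{ρ∘α, 0, I}(α⁻¹(x), α⁻¹(A))`. -/
theorem imh_att_friendly
    (d : ℕ) (hd : 1 ≤ d) (σ : ℝ) (hσ : 0 < σ)
    (ρ : (Fin d → ℝ) → ℝ) (hρ_meas : Measurable ρ) (hρ_pos : ∀ x, 0 < ρ x)
    (L : Matrix (Fin d) (Fin d) ℝ) (hL : IsUnit L.det) (c : Fin d → ℝ)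
    (S : Matrix (Fin d) (Fin d) ℝ) (hS : S = L * Lᵀ)
    (x : Fin d → ℝ) (A : Set (Fin d → ℝ)) (hA : MeasurableSet A) :
    imhKernelVal d σ ρ c S x A =
      imhKernelVal d σ (fun y => ρ (L.mulVec y + c)) 0 1
        (L⁻¹.mulVec (x - c)) ((fun y => L.mulVec y + c) ⁻¹' A) :=
  imh_att_friendly_general d σ ρ L hL c S hS x A
end
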